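/- arXiv:0807.4318 — 3 statements merged into one kernel-verified Lean document; each statement's English description precedes it below -/
import Mathlib

section
/- For any ε > 0 and any constant C > 0, there exist arbitrarily large integers m and positive integers N₁, N₂, N₃ with N₁N₂N₃ > C·m such that the set {x₁x₂x₃ mod m : x_j ∈ [1, N_j]} misses more than m^((2-ε)/3 - ε) residue classes modulo m. Concretely: if m = qn with q prime and q > m^((1+ε)/3), then none of the n residues q, 2q, …, nq modulo m is of the form x₁x₂x₃ mod m with all x_j ≤ m^((1+ε)/3). -/
/-!
If a prime q divides m, a product of three integers in [1, q) is prime to q, so it is never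
congruent modulo m to a multiple of q; and the multiples jq, j < n, are pairwise distinct
modulo m = qn. Taking N₁ = N₂ = N₃ = q - 1 and n = ⌊q² / K⌋ with K > 8C gives
N₁N₂N₃ > Cm, while the n missed residues number about m^(2/3), more than m^((2-ε)/3 - ε)
once q is large.
-/

open Filter Finset

theorem natCast_mul_ne_natCast_mul_of_lt_prime {m q : ℕ} (hq : q.Prime) (hqm : q ∣ m)
    {x₁ x₂ x₃ : ℕ} (h₁ : 0 < x₁) (h₂ : 0 < x₂) (h₃ : 0 < x₃)
    (h₁q : x₁ < q) (h₂q : x₂ < q) (h₃q : x₃ < q) (j : ℕ) :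
    ((x₁ * x₂ * x₃ : ℕ) : ZMod m) ≠ ((j * q : ℕ) : ZMod m) := by
  intro h
  have hdvd : q ∣ x₁ * x₂ * x₃ := by
    have h' := congrArg (ZMod.castHom hqm (ZMod q)) h
    rwa [map_natCast, map_natCast, Nat.cast_mul j q, ZMod.natCast_self, mul_zero,
      ZMod.natCast_eq_zero_iff] at h'
  refine hq.not_dvd_mul (hq.not_dvd_mul ?_ ?_) ?_ hdvd <;>
    exact Nat.not_dvd_of_pos_of_lt ‹_› ‹_›

theorem injOn_natCast_mul_range {q n : ℕ} (hq : q ≠ 0) :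
    Set.InjOn (fun j : ℕ => ((j * q : ℕ) : ZMod (q * n))) (range n) := by
  intro j hj j' hj' h
  rw [coe_range, Set.mem_Iio] at hj hj'
  rw [ZMod.natCast_eq_natCast_iff, mul_comm q n] at h
  exact (h.mul_right_cancel' hq).eq_of_lt_of_lt hj hj'

theorem le_ncard_compl_image_mul {q n N₁ N₂ N₃ : ℕ} (hq : q.Prime)
    (h₁ : N₁ < q) (h₂ : N₂ < q) (h₃ : N₃ < q) :
    n ≤ {r : ZMod (q * n) | r ∉ (Icc 1 N₁ ×ˢ Icc 1 N₂ ×ˢ Icc 1 N₃).image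
      (fun t => ((t.1 * t.2.1 * t.2.2 : ℕ) : ZMod (q * n)))}.ncard := by
  rcases Nat.eq_zero_or_pos n with rfl | hn
  · exact Nat.zero_le _
  have : NeZero (q * n) := ⟨(Nat.mul_pos hq.pos hn).ne'⟩
  calc n = (range n : Set ℕ).ncard := by rw [Set.ncard_coe_finset, card_range]
    _ ≤ _ := by
      refine Set.ncard_le_ncard_of_injOn _ ?_ (injOn_natCast_mul_range hq.ne_zero) (Set.toFinite _)
      rintro j - hmem
      obtain ⟨⟨x₁, x₂, x₃⟩, hx, heq⟩ := mem_image.mp hmem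
      simp only [mem_product, mem_Icc] at hx
      exact natCast_mul_ne_natCast_mul_of_lt_prime hq (dvd_mul_right q n) hx.1.1 hx.2.1.1
        hx.2.2.1 (by omega) (by omega) (by omega) j heq

theorem rpow_lt_natCast_sq_div {b : ℝ} (hb₀ : 0 ≤ b) (hb : b < 2) {K : ℕ} (hK : 0 < K) :
    ∀ᶠ q : ℕ in atTop, (q : ℝ) ^ b < (q ^ 2 / K : ℕ) := by
  have hlarge : ∀ᶠ q : ℕ in atTop, 2 * (K : ℝ) ≤ (q : ℝ) ^ (2 - b) :=
    ((tendsto_rpow_atTop (by linarith)).comp tendsto_natCast_atTop_atTop).eventually_ge_atTop _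
  filter_upwards [hlarge, eventually_ge_atTop 1] with q hq hq₁
  have hq₁' : (1 : ℝ) ≤ q := by exact_mod_cast hq₁
  have hqb : 1 ≤ (q : ℝ) ^ b := Real.one_le_rpow hq₁' hb₀
  have hKpos : (0 : ℝ) < K := by exact_mod_cast hK
  have htwice : K * (2 * (q : ℝ) ^ b) < K * ((q ^ 2 / K : ℕ) + 1) :=
    calc K * (2 * (q : ℝ) ^ b) = 2 * K * (q : ℝ) ^ b := by ring
      _ ≤ (q : ℝ) ^ (2 - b) * (q : ℝ) ^ b := by gcongr
      _ = ((q ^ 2 : ℕ) : ℝ) := by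
        rw [← Real.rpow_add (by linarith), sub_add_cancel, Nat.cast_pow, Real.rpow_two]
      _ < K * ((q ^ 2 / K : ℕ) + 1) := by exact_mod_cast Nat.lt_mul_div_succ (q ^ 2) hK
  linarith [lt_of_mul_lt_mul_left htwice hKpos.le]

theorem rpow_le_rpow_mul_three {m q a : ℝ} (hm : 0 ≤ m) (hq : 0 ≤ q) (hmq : m ≤ q ^ 3)
    (ha : 0 ≤ a) : m ^ a ≤ q ^ (3 * a) := by
  rw [show (3 : ℝ) * a = ((3 : ℕ) : ℝ) * a by norm_num, Real.rpow_natCast_mul hq]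
  exact Real.rpow_le_rpow hm hmq ha

theorem mul_lt_pred_cube {C : ℝ} {q n K : ℕ} (hq : 2 ≤ q) (hn : 0 < n) (hK : 8 * C < K)
    (hnK : K * n ≤ q ^ 2) :
    C * ((q * n : ℕ) : ℝ) < (((q - 1) * (q - 1) * (q - 1) : ℕ) : ℝ) := by
  have hcube : q ^ 3 ≤ 8 * ((q - 1) * (q - 1) * (q - 1)) := by
    have : q ≤ 2 * (q - 1) := by omega
    calc q ^ 3 ≤ (2 * (q - 1)) ^ 3 := Nat.pow_le_pow_left this 3
      _ = _ := by ring
  have hqnK : ((K * (q * n) : ℕ) : ℝ) ≤ ((8 * ((q - 1) * (q - 1) * (q - 1)) : ℕ) : ℝ) := by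
    exact_mod_cast (calc K * (q * n) = q * (K * n) := by ring
      _ ≤ q * q ^ 2 := Nat.mul_le_mul_left q hnK
      _ = q ^ 3 := by ring
      _ ≤ _ := hcube)
  have hqn : (0 : ℝ) < (q : ℝ) * n := by exact_mod_cast Nat.mul_pos (by omega) hn
  push_cast at hqnK ⊢
  nlinarith [mul_lt_mul_of_pos_right hK hqn]

theorem rpow_lt_ncard_compl_image_mul_pred {q n : ℕ} {δ a : ℝ} (hq : q.Prime) (hn : 0 < n)
    (hnq : n ≤ q ^ 2) (hδa : δ ≤ a) (ha : 0 ≤ a) (hqn : (q : ℝ) ^ (3 * a) < n) :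
    ((q * n : ℕ) : ℝ) ^ δ <
      ({r : ZMod (q * n) | r ∉ (Icc 1 (q - 1) ×ˢ Icc 1 (q - 1) ×ˢ Icc 1 (q - 1)).image
        (fun t => ((t.1 * t.2.1 * t.2.2 : ℕ) : ZMod (q * n)))}.ncard : ℝ) := by
  have hm : ((q * n : ℕ) : ℝ) ≤ (q : ℝ) ^ 3 := by
    exact_mod_cast (calc q * n ≤ q * q ^ 2 := Nat.mul_le_mul_left q hnq
      _ = q ^ 3 := by ring)
  have hN : q - 1 < q := Nat.sub_lt hq.pos one_pos
  calc ((q * n : ℕ) : ℝ) ^ δ ≤ ((q * n : ℕ) : ℝ) ^ a :=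
        Real.rpow_le_rpow_of_exponent_le (by exact_mod_cast Nat.mul_pos hq.pos hn) hδa
    _ ≤ (q : ℝ) ^ (3 * a) := rpow_le_rpow_mul_three (Nat.cast_nonneg _) (Nat.cast_nonneg _) hm ha
    _ < n := hqn
    _ ≤ _ := by exact_mod_cast le_ncard_compl_image_mul hq hN hN hN

/-- For any ε > 0 and C > 0 there are arbitrarily large m and N₁,N₂,N₃ with N₁N₂N₃ > C·m
such that {x₁x₂x₃ mod m : xⱼ ∈ [1,Nⱼ]} misses more than m^((2-ε)/3-ε) residue classes.
Concretely, if m = qn with q prime, q > m^((1+ε)/3), then none of the residues jq mod m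
(1 ≤ j ≤ n) is a product x₁x₂x₃ mod m with all xⱼ ≤ m^((1+ε)/3). -/
theorem stmt7 :
    ∀ ε : ℝ, 0 < ε → ∀ C : ℝ, 0 < C →
    ((∀ M : ℕ, ∃ m : ℕ, M ≤ m ∧ ∃ N₁ N₂ N₃ : ℕ, 0 < N₁ ∧ 0 < N₂ ∧ 0 < N₃ ∧
        C * (m : ℝ) < ((N₁ * N₂ * N₃ : ℕ) : ℝ) ∧
        (m : ℝ) ^ (((2 : ℝ) - ε)/3 - ε) <
          (({r : ZMod m | r ∉ (Finset.Icc 1 N₁ ×ˢ Finset.Icc 1 N₂ ×ˢ Finset.Icc 1 N₃).image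
              (fun t => ((t.1 * t.2.1 * t.2.2 : ℕ) : ZMod m))}.ncard : ℝ))) ∧
      (∀ m q n : ℕ, m = q * n → q.Prime → (m : ℝ) ^ ((1 + ε)/3) < (q : ℝ) →
        ∀ j : ℕ, 1 ≤ j → j ≤ n →
        ¬ ∃ x₁ x₂ x₃ : ℕ,
            (1 ≤ x₁ ∧ (x₁ : ℝ) ≤ (m : ℝ) ^ ((1 + ε)/3)) ∧
            (1 ≤ x₂ ∧ (x₂ : ℝ) ≤ (m : ℝ) ^ ((1 + ε)/3)) ∧
            (1 ≤ x₃ ∧ (x₃ : ℝ) ≤ (m : ℝ) ^ ((1 + ε)/3)) ∧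
            ((x₁ * x₂ * x₃ : ℕ) : ZMod m) = ((j * q : ℕ) : ZMod m))) := by
  intro ε hε C _
  refine ⟨fun M => ?_, fun m q n hm hq hqm j _ _ => ?_⟩
  · set a := max (((2 : ℝ) - ε) / 3 - ε) 0
    set K := ⌈8 * C⌉₊ + 1
    have hK : 8 * C < K := by
      push_cast [K]
      exact (Nat.le_ceil _).trans_lt (lt_add_one _)
    have ha : 3 * a < 2 := by
      have : a < 2 / 3 := max_lt (by linarith) (by norm_num)
      linarith
    obtain ⟨Q, hQ⟩ := ((rpow_lt_natCast_sq_div (by positivity) ha (Nat.succ_pos _ : 0 < K)).and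
      (eventually_ge_atTop M)).exists_forall_of_atTop
    obtain ⟨q, hQq, hq⟩ := Nat.exists_infinite_primes Q
    obtain ⟨hqn, hMq⟩ := hQ q hQq
    set n := q ^ 2 / K
    have hn : 0 < n := by
      have : (0 : ℝ) < n := (Real.rpow_nonneg q.cast_nonneg _).trans_lt hqn
      exact_mod_cast this
    have hN₀ : 0 < q - 1 := Nat.sub_pos_of_lt hq.one_lt
    exact ⟨q * n, hMq.trans (Nat.le_mul_of_pos_right q hn), q - 1, q - 1, q - 1, hN₀, hN₀, hN₀,
      mul_lt_pred_cube hq.two_le hn hK (Nat.mul_div_le _ _),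
      rpow_lt_ncard_compl_image_mul_pred hq hn (Nat.div_le_self _ _) (le_max_left _ _)
        (le_max_right _ _) hqn⟩
  · rintro ⟨x₁, x₂, x₃, ⟨h₁, h₁q⟩, ⟨h₂, h₂q⟩, ⟨h₃, h₃q⟩, h⟩
    have hlt : ∀ x : ℕ, (x : ℝ) ≤ (m : ℝ) ^ ((1 + ε) / 3) → x < q := fun x hx => by
      exact_mod_cast hx.trans_lt hqm
    exact natCast_mul_ne_natCast_mul_of_lt_prime hq (hm ▸ dvd_mul_right q n) h₁ h₂ h₃
      (hlt _ h₁q) (hlt _ h₂q) (hlt _ h₃q) j h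
end

section
/- For every ε > 0, the number of 2n-tuples (u₁, …, u_{2n}) of integers in [1, U] satisfying u₁⋯u_n = u_{n+1}⋯u_{2n} is O_{n,ε}(U^(n+ε)). -/
/-! Once u₁, …, uₙ are fixed, their product m ≤ Uⁿ is fixed and every u_{n+j} divides m, so the
second half takes at most d(m)ⁿ values; the divisor bound d(m) ≤ C_δ m^δ then leaves at most
Uⁿ · C U^ε solutions. The divisor bound is proved prime by prime, comparing
d(m) = ∏ (a_p + 1) with m^δ = ∏ (p^δ)^{a_p}: by Bernoulli's inequality a + 1 ≤ x^a once x ≥ 2,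
and a + 1 ≤ max 1 (2^δ - 1)⁻¹ · (p^δ)^a for every prime p, which is only needed for the at most
⌈2^{1/δ}⌉ primes with p^δ < 2. -/

open Finset Real

lemma add_one_le_mul_pow {x y : ℝ} (hy : 1 < y) (hyx : y ≤ x) (a : ℕ) :
    (a + 1 : ℝ) ≤ max 1 (y - 1)⁻¹ * x ^ a := by
  set K := max 1 (y - 1)⁻¹
  have hK : 1 ≤ K := le_max_left _ _
  have hKy : 1 ≤ K * (y - 1) := by
    rw [← div_le_iff₀ (sub_pos.2 hy), one_div]; exact le_max_right _ _
  have bernoulli : 1 + a * (y - 1) ≤ y ^ a := one_add_mul_sub_le_pow (by linarith) a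
  calc (a + 1 : ℝ) ≤ K * (1 + a * (y - 1)) := by nlinarith [(Nat.cast_nonneg a : (0:ℝ) ≤ a)]
    _ ≤ K * y ^ a := by gcongr
    _ ≤ K * x ^ a := by gcongr

lemma Nat.cast_rpow_eq_prod_primeFactors {m : ℕ} (hm : m ≠ 0) (ε : ℝ) :
    (m : ℝ) ^ ε = ∏ p ∈ m.primeFactors, ((p : ℝ) ^ ε) ^ m.factorization p := by
  conv_lhs => rw [Nat.prod_primeFactors_pow_factorization hm]
  push_cast
  rw [← Real.finsetProd_rpow _ _ fun p _ => by positivity]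
  exact prod_congr rfl fun p _ => (rpow_pow_comm p.cast_nonneg _ _).symm

lemma card_filter_rpow_lt_two_le (s : Finset ℕ) {ε : ℝ} (hε : 0 < ε) :
    #{p ∈ s | ((p : ℕ) : ℝ) ^ ε < 2} ≤ ⌈(2 : ℝ) ^ ε⁻¹⌉₊ := by
  calc #{p ∈ s | ((p : ℕ) : ℝ) ^ ε < 2} ≤ #(range ⌈(2 : ℝ) ^ ε⁻¹⌉₊) := by
        refine card_le_card fun p hp => ?_
        rw [mem_filter] at hp
        rw [mem_range, Nat.lt_ceil, lt_rpow_inv_iff_of_pos p.cast_nonneg zero_le_two hε]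
        exact hp.2
    _ = _ := card_range _

theorem Nat.card_divisors_le_mul_rpow {ε : ℝ} (hε : 0 < ε) :
    ∃ C : ℝ, 0 < C ∧ ∀ m : ℕ, m ≠ 0 → (#m.divisors : ℝ) ≤ C * (m : ℝ) ^ ε := by
  set K := max 1 ((2 : ℝ) ^ ε - 1)⁻¹
  have hK : 1 ≤ K := le_max_left _ _
  have h2ε : 1 < (2 : ℝ) ^ ε := one_lt_rpow one_lt_two hε
  refine ⟨K ^ ⌈(2 : ℝ) ^ ε⁻¹⌉₊, by positivity, fun m hm => ?_⟩
  have local_bound : ∀ p ∈ m.primeFactors, ((m.factorization p + 1 : ℕ) : ℝ) ≤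
      (if (p : ℝ) ^ ε < 2 then K else 1) * ((p : ℝ) ^ ε) ^ m.factorization p := by
    intro p hp
    have hp2 : (2 : ℝ) ≤ p := by exact_mod_cast (Nat.prime_of_mem_primeFactors hp).two_le
    push_cast
    split_ifs with hsmall
    · exact add_one_le_mul_pow h2ε (rpow_le_rpow zero_le_two hp2 hε.le) _
    · simpa [one_add_one_eq_two.symm] using
        add_one_le_mul_pow one_lt_two (not_lt.1 hsmall) (m.factorization p)
  rw [Nat.card_divisors hm, Nat.cast_rpow_eq_prod_primeFactors hm]
  push_cast
  calc ∏ p ∈ m.primeFactors, ((m.factorization p : ℝ) + 1)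
      ≤ ∏ p ∈ m.primeFactors,
          (if (p : ℝ) ^ ε < 2 then K else 1) * ((p : ℝ) ^ ε) ^ m.factorization p := by
        refine prod_le_prod (fun p _ => by positivity) fun p hp => ?_
        exact_mod_cast local_bound p hp
    _ = K ^ #{p ∈ m.primeFactors | ((p : ℕ) : ℝ) ^ ε < 2} *
          ∏ p ∈ m.primeFactors, ((p : ℝ) ^ ε) ^ m.factorization p := by
        rw [prod_mul_distrib, prod_ite, prod_const, prod_const_one, mul_one]
    _ ≤ _ := by
        gcongr
        exact card_filter_rpow_lt_two_le _ hε

theorem Nat.card_divisors_pow_le_mul_rpow {k : ℕ} (hk : 0 < k) {ε : ℝ} (hε : 0 < ε) :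
    ∃ C : ℝ, 0 < C ∧ ∀ m : ℕ, m ≠ 0 → (#m.divisors : ℝ) ^ k ≤ C * (m : ℝ) ^ ε := by
  obtain ⟨C, hC, hdiv⟩ := Nat.card_divisors_le_mul_rpow (by positivity : 0 < ε / k)
  refine ⟨C ^ k, pow_pos hC k, fun m hm => ?_⟩
  calc (#m.divisors : ℝ) ^ k ≤ (C * (m : ℝ) ^ (ε / k)) ^ k := by gcongr; exact hdiv m hm
    _ = C ^ k * (m : ℝ) ^ ε := by
        rw [mul_pow, ← rpow_mul_natCast m.cast_nonneg,
          div_mul_cancel₀ _ (Nat.cast_ne_zero.2 hk.ne')]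

lemma card_filter_product_eq_sum {α β : Type*} (A : Finset α) (B : Finset β) (P : α → β → Prop)
    [∀ a b, Decidable (P a b)] :
    #{x ∈ A ×ˢ B | P x.1 x.2} = ∑ a ∈ A, #{b ∈ B | P a b} := by
  simp only [card_filter, sum_product]

lemma card_filter_eq_prod_le_card_divisors_pow {ι : Type*} [Fintype ι] [DecidableEq ι]
    (t : ι → Finset ℕ) {m : ℕ} (hm : m ≠ 0) :
    #{b ∈ Fintype.piFinset t | m = ∏ i, b i} ≤ #m.divisors ^ Fintype.card ι := by
  calc #{b ∈ Fintype.piFinset t | m = ∏ i, b i}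
      ≤ #(Fintype.piFinset fun _ : ι => m.divisors) := by
        refine card_le_card fun b hb => ?_
        rw [mem_filter] at hb
        rw [Fintype.mem_piFinset]
        exact fun i => Nat.mem_divisors.2 ⟨hb.2 ▸ dvd_prod_of_mem b (mem_univ i), hm⟩
    _ = #m.divisors ^ Fintype.card ι := by simp

/-- The number of 2n-tuples in [1,U] whose first-half product equals the second-half
product is O_{n,ε}(U^(n+ε)). -/
theorem stmt10 :
    ∀ n : ℕ, 0 < n → ∀ ε : ℝ, 0 < ε → ∃ C : ℝ, 0 < C ∧ ∀ U : ℕ, 0 < U →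
      ((((Fintype.piFinset fun _ : Fin n => Finset.Icc 1 U) ×ˢ
         (Fintype.piFinset fun _ : Fin n => Finset.Icc 1 U)).filter
         (fun t => (∏ i, t.1 i) = ∏ i, t.2 i)).card : ℝ)
        ≤ C * (U : ℝ) ^ ((n : ℝ) + ε) := by
  intro n hn ε hε
  obtain ⟨C, hC, hdiv⟩ := Nat.card_divisors_pow_le_mul_rpow hn (by positivity : 0 < ε / n)
  refine ⟨C, hC, fun U hU => ?_⟩
  set A := Fintype.piFinset fun _ : Fin n => Finset.Icc 1 U
  have fiber_bound : ∀ a ∈ A, (#{b ∈ A | ∏ i, a i = ∏ i, b i} : ℝ) ≤ C * (U : ℝ) ^ ε := by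
    intro a ha
    simp only [A, Fintype.mem_piFinset, mem_Icc] at ha
    have hm : ∏ i, a i ≠ 0 := prod_ne_zero_iff.2 fun i _ => Nat.one_le_iff_ne_zero.1 (ha i).1
    have hmU : ∏ i, a i ≤ U ^ n := by
      simpa using prod_le_pow_card univ a U fun i _ => (ha i).2
    calc (#{b ∈ A | ∏ i, a i = ∏ i, b i} : ℝ) ≤ (#(∏ i, a i).divisors : ℝ) ^ n := by
          exact_mod_cast (card_filter_eq_prod_le_card_divisors_pow _ hm).trans_eq
            (by rw [Fintype.card_fin])
      _ ≤ C * ((∏ i, a i : ℕ) : ℝ) ^ (ε / n) := hdiv _ hm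
      _ ≤ C * ((U : ℝ) ^ n) ^ (ε / n) := by gcongr; exact_mod_cast hmU
      _ = C * (U : ℝ) ^ ε := by
          rw [← rpow_natCast_mul (Nat.cast_nonneg U),
            mul_div_cancel₀ _ (Nat.cast_ne_zero.2 hn.ne')]
  calc (#{x ∈ A ×ˢ A | ∏ i, x.1 i = ∏ i, x.2 i} : ℝ)
      = ∑ a ∈ A, (#{b ∈ A | ∏ i, a i = ∏ i, b i} : ℝ) := by
        exact_mod_cast card_filter_product_eq_sum A A fun a b => ∏ i, a i = ∏ i, b i
    _ ≤ ∑ _a ∈ A, C * (U : ℝ) ^ ε := sum_le_sum fiber_bound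
    _ = C * (U : ℝ) ^ ((n : ℝ) + ε) := by
        have hA : #A = U ^ n := by simp [A]
        rw [sum_const, nsmul_eq_mul, hA, rpow_add (Nat.cast_pos.2 hU), rpow_natCast]
        push_cast
        ring
end

section
/- Let m be a positive integer and N₁, N₂, N₃ positive integers with N₁N₂N₃ > m. Then for every ε > 0, the number I of sextuples (x₁, x₂, x₃, y₁, y₂, y₃) with x_j, y_j ∈ [1, N_j] satisfying x₁x₂x₃ ≡ y₁y₂y₃ (mod m) is O_ε((N₁N₂N₃)² · m^(ε-1)). -/
/-!
Replacing each coordinate by its least positive residue modulo `m` maps the box `∏ [1, Nⱼ]`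
into `∏ [1, min Nⱼ m]` with fibres of size at most `⌈Nⱼ / m⌉` and preserves `x₁x₂x₃ mod m`;
so it suffices to count in a box whose sides are `≤ m`, of volume `P ≥ m`. There, once `x` is
fixed, a congruent `y` has `y₁y₂y₃ = t m + (x₁x₂x₃ mod m)` with `0 ≤ t ≤ P / m`, and each value
`v ≤ P ≤ m³` is a product `y₁y₂y₃` in at most `d(v)² = m^o(1)` ways. This gives
`≪ P² m^(ε-1)` congruent pairs, and undoing the reduction costs `(∏ ⌈Nⱼ / m⌉)² ≤ (8 N₁N₂N₃ / P)²`.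
-/

open Finset Real

theorem succ_le_rpow_pow_of_two_le_rpow {p ε : ℝ} (hp : 0 ≤ p) (h : 2 ≤ p ^ ε) (a : ℕ) :
    (a : ℝ) + 1 ≤ (p ^ a) ^ ε := by
  rw [← rpow_natCast, ← rpow_mul hp, mul_comm, rpow_mul hp, rpow_natCast]
  calc (a : ℝ) + 1 ≤ 2 ^ a := by exact_mod_cast Nat.lt_two_pow_self
    _ ≤ (p ^ ε) ^ a := pow_le_pow_left₀ zero_le_two h a

theorem succ_le_mul_rpow_pow {p ε : ℝ} (hε : 0 < ε) (hp : 2 ≤ p) (a : ℕ) :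
    (a : ℝ) + 1 ≤ max 1 (ε * log 2)⁻¹ * (p ^ a) ^ ε := by
  have hexp : 1 + a * (ε * log 2) ≤ (p ^ a) ^ ε := by
    calc 1 + a * (ε * log 2) ≤ exp (a * ε * log 2) := by
          linarith [add_one_le_exp (a * ε * log 2)]
      _ = ((2 : ℝ) ^ a) ^ ε := by
        rw [← rpow_natCast, ← rpow_mul zero_le_two, rpow_def_of_pos two_pos]; ring_nf
      _ ≤ (p ^ a) ^ ε := by gcongr
  have hK : (a : ℝ) ≤ max 1 (ε * log 2)⁻¹ * (a * (ε * log 2)) :=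
    calc (a : ℝ) = (ε * log 2)⁻¹ * (a * (ε * log 2)) := by field_simp
      _ ≤ _ := by gcongr; exact le_max_right _ _
  calc (a : ℝ) + 1 ≤ max 1 (ε * log 2)⁻¹ * (1 + a * (ε * log 2)) := by
        linarith [le_max_left 1 (ε * log 2)⁻¹]
    _ ≤ _ := by gcongr

theorem exists_card_divisors_le_mul_rpow {ε : ℝ} (hε : 0 < ε) :
    ∃ C : ℝ, 0 < C ∧ ∀ n : ℕ, n ≠ 0 → (#n.divisors : ℝ) ≤ C * n ^ ε := by
  set B := ⌈(2 : ℝ) ^ ε⁻¹⌉₊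
  set K := max 1 (ε * log 2)⁻¹
  have hK : 1 ≤ K := le_max_left _ _
  refine ⟨K ^ B, by positivity, fun n hn => ?_⟩
  -- only the primes `p ≤ B` can have `p ^ ε < 2`, and each costs at most a factor `K`
  have hfactor : ∀ p ∈ n.primeFactors, (n.factorization p : ℝ) + 1 ≤
      (if p ≤ B then K else 1) * ((p : ℝ) ^ n.factorization p) ^ ε := by
    intro p hp
    have hp2 := (Nat.prime_of_mem_primeFactors hp).two_le
    split_ifs with hpB
    · exact succ_le_mul_rpow_pow hε (by exact_mod_cast hp2) _
    · rw [one_mul]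
      refine succ_le_rpow_pow_of_two_le_rpow p.cast_nonneg ?_ _
      calc (2 : ℝ) = ((2 : ℝ) ^ ε⁻¹) ^ ε := by
            rw [← rpow_mul zero_le_two, inv_mul_cancel₀ hε.ne', rpow_one]
        _ ≤ (p : ℝ) ^ ε := by
          gcongr
          exact (Nat.le_ceil _).trans (by exact_mod_cast (not_le.mp hpB).le)
  have hsmall : ∏ p ∈ n.primeFactors, (if p ≤ B then K else 1) ≤ K ^ B := by
    rw [prod_ite, prod_const_one, mul_one, prod_const]
    refine pow_le_pow_right₀ hK ((card_le_card fun p hp => ?_).trans (Nat.card_Icc 1 B).le)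
    rw [mem_filter] at hp
    exact mem_Icc.mpr ⟨(Nat.prime_of_mem_primeFactors hp.1).one_le, hp.2⟩
  calc (#n.divisors : ℝ) = ∏ p ∈ n.primeFactors, ((n.factorization p : ℝ) + 1) := by
        rw [Nat.card_divisors hn]; push_cast; rfl
    _ ≤ ∏ p ∈ n.primeFactors,
          (if p ≤ B then K else 1) * ((p : ℝ) ^ n.factorization p) ^ ε :=
        prod_le_prod (fun _ _ => by positivity) hfactor
    _ ≤ K ^ B * n ^ ε := by
        conv_rhs => rw [Nat.prod_primeFactors_pow_factorization hn]
        push_cast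
        rw [prod_mul_distrib, finsetProd_rpow _ _ (fun _ _ => by positivity)]
        gcongr

theorem exists_card_divisors_sq_le_mul_rpow_of_le_pow {ε : ℝ} (hε : 0 < ε) {k : ℕ}
    (hk : 0 < k) :
    ∃ C : ℝ, 0 < C ∧
      ∀ m v : ℕ, v ≠ 0 → v ≤ m ^ k → (#v.divisors : ℝ) ^ 2 ≤ C * m ^ ε := by
  obtain ⟨C, hC, hdiv⟩ := exists_card_divisors_le_mul_rpow (ε := ε / (2 * k)) (by positivity)
  refine ⟨C ^ 2, by positivity, fun m v hv hvm => ?_⟩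
  have hpow : (v : ℝ) ^ (ε / (2 * k)) ≤ (m : ℝ) ^ (ε / 2) :=
    calc (v : ℝ) ^ (ε / (2 * k)) ≤ ((m : ℝ) ^ k) ^ (ε / (2 * k)) := by
          gcongr; exact_mod_cast hvm
      _ = (m : ℝ) ^ (ε / 2) := by
        rw [← rpow_natCast, ← rpow_mul m.cast_nonneg]
        congr 1
        field_simp
  calc (#v.divisors : ℝ) ^ 2 ≤ (C * (m : ℝ) ^ (ε / 2)) ^ 2 := by
        gcongr
        exact (hdiv v hv).trans (by gcongr)
    _ = C ^ 2 * m ^ ε := by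
        rw [mul_pow, ← rpow_mul_natCast m.cast_nonneg]
        norm_num

theorem card_filter_pairs_le_of_fibers {α β γ : Type*} [DecidableEq β] [DecidableEq γ]
    {s : Finset α} {t : Finset β} {f : α → β} {g : β → γ} {h : α → γ} {n : ℕ}
    (hst : ∀ a ∈ s, f a ∈ t) (hgf : ∀ a ∈ s, g (f a) = h a)
    (hn : ∀ b ∈ t, #{a ∈ s | f a = b} ≤ n) :
    #{p ∈ s ×ˢ s | h p.1 = h p.2} ≤ n ^ 2 * #{q ∈ t ×ˢ t | g q.1 = g q.2} := by
  refine card_le_mul_card_image_of_maps_to (f := Prod.map f f) ?_ _ fun q hq => ?_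
  · simp only [mem_filter, mem_product, Prod.map_fst, Prod.map_snd]
    rintro p ⟨⟨hp₁, hp₂⟩, hp⟩
    exact ⟨⟨hst _ hp₁, hst _ hp₂⟩, by rw [hgf _ hp₁, hgf _ hp₂, hp]⟩
  rw [mem_filter, mem_product] at hq
  calc #{p ∈ {p ∈ s ×ˢ s | h p.1 = h p.2} | Prod.map f f p = q}
      ≤ #({a ∈ s | f a = q.1} ×ˢ {a ∈ s | f a = q.2}) := by
        refine card_le_card fun p hp => ?_
        simp only [mem_filter, mem_product, Prod.ext_iff, Prod.map_fst, Prod.map_snd] at hp ⊢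
        tauto
    _ ≤ n ^ 2 := by rw [card_product, sq]; exact Nat.mul_le_mul (hn _ hq.1.1) (hn _ hq.1.2)

theorem card_filter_natCast_eq_le {α : Type*} [DecidableEq α] (s : Finset α) (h : α → ℕ)
    (m P D : ℕ) (hP : ∀ a ∈ s, h a ≤ P) (hD : ∀ a ∈ s, #{b ∈ s | h b = h a} ≤ D) :
    #{p ∈ s ×ˢ s | (h p.1 : ZMod m) = h p.2} ≤ #s * (P / m + 1) * D := by
  -- `p.2` is pinned down, among the `h`-fibre, by `p.1` and the quotient `h p.2 / m`
  have hmaps : ∀ p ∈ {p ∈ s ×ˢ s | (h p.1 : ZMod m) = h p.2},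
      (p.1, h p.2 / m) ∈ s ×ˢ range (P / m + 1) := by
    intro p hp
    simp only [mem_filter, mem_product, mem_range] at hp ⊢
    exact ⟨hp.1.1, Nat.lt_succ_of_le (Nat.div_le_div_right (hP _ hp.1.2))⟩
  refine (card_le_mul_card_image_of_maps_to hmaps D fun q _ => ?_).trans_eq ?_
  · rcases eq_empty_or_nonempty {p ∈ {p ∈ s ×ˢ s | (h p.1 : ZMod m) = h p.2} |
        (p.1, h p.2 / m) = q} with hempty | ⟨p₀, hp₀⟩
    · simp [hempty]
    have hval : ∀ p ∈ {p ∈ {p ∈ s ×ˢ s | (h p.1 : ZMod m) = h p.2} |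
        (p.1, h p.2 / m) = q}, h p.2 = q.2 * m + h q.1 % m := by
      intro p hp
      simp only [mem_filter, Prod.ext_iff, ZMod.natCast_eq_natCast_iff'] at hp
      rw [← hp.2.1, ← hp.2.2, hp.1.2, mul_comm, Nat.div_add_mod]
    refine (card_le_card_of_injOn Prod.snd (fun p hp => ?_) fun p hp p' hp' hpp' => ?_).trans
      (hD p₀.2 (mem_product.mp (mem_filter.mp (mem_filter.mp hp₀).1).1).2)
    · have hp' := hp
      simp only [mem_coe, mem_filter, mem_product] at hp' ⊢
      exact ⟨hp'.1.1.2, by rw [hval p hp, hval p₀ hp₀]⟩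
    · simp only [mem_coe, mem_filter, Prod.ext_iff] at hp hp'
      exact Prod.ext (hp.2.1.trans hp'.2.1.symm) hpp'
  · rw [card_product, card_range]; ring

def tripleProd (x : ℕ × ℕ × ℕ) : ℕ := x.1 * x.2.1 * x.2.2

theorem card_filter_tripleProd_eq_le (s : Finset (ℕ × ℕ × ℕ)) {v : ℕ} (hv : v ≠ 0) :
    #{y ∈ s | tripleProd y = v} ≤ #v.divisors ^ 2 := by
  rw [sq, ← card_product]
  refine card_le_card_of_injOn (fun y => (y.1, y.2.1)) (fun y hy => ?_)
    fun y hy y' hy' hyy' => ?_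
  · have hyv : y.1 * y.2.1 * y.2.2 = v := (mem_filter.mp hy).2
    simp only [coe_product, Set.mem_prod, mem_coe, Nat.mem_divisors]
    exact ⟨⟨⟨y.2.1 * y.2.2, by rw [← hyv]; ring⟩, hv⟩, ⟨y.1 * y.2.2, by rw [← hyv]; ring⟩, hv⟩
  · have hyv : y.1 * y.2.1 * y.2.2 = v := (mem_filter.mp hy).2
    have hyv' : y'.1 * y'.2.1 * y'.2.2 = v := (mem_filter.mp hy').2
    simp only [Prod.ext_iff] at hyy'
    have hpos : y.1 * y.2.1 ≠ 0 := fun h0 => hv (by rw [← hyv, h0, zero_mul])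
    have h3 : y.2.2 = y'.2.2 :=
      Nat.eq_of_mul_eq_mul_left (Nat.pos_of_ne_zero hpos) (by rw [hyv, hyy'.1, hyy'.2, hyv'])
    exact Prod.ext hyy'.1 (Prod.ext hyy'.2 h3)

theorem card_filter_prodMap_eq {α β γ δ : Type*} [DecidableEq γ] [DecidableEq δ]
    (s : Finset α) (t : Finset β) (f : α → γ) (g : β → δ) (b : γ × δ) :
    #{x ∈ s ×ˢ t | Prod.map f g x = b} = #{a ∈ s | f a = b.1} * #{c ∈ t | g c = b.2} := by
  simp only [Prod.ext_iff, Prod.map_fst, Prod.map_snd]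
  rw [filter_product (fun a => f a = b.1) (fun c => g c = b.2), card_product]

def leastPosResidue (m x : ℕ) : ℕ := (x - 1) % m + 1

theorem leastPosResidue_mem_Icc {m N x : ℕ} (hm : 0 < m) (hx : x ∈ Icc 1 N) :
    leastPosResidue m x ∈ Icc 1 (min N m) := by
  rw [mem_Icc] at hx ⊢
  have := Nat.mod_lt (x - 1) hm
  have := Nat.mod_le (x - 1) m
  unfold leastPosResidue
  omega

theorem natCast_leastPosResidue {m x : ℕ} (hx : 1 ≤ x) :
    (leastPosResidue m x : ZMod m) = x := by
  rw [ZMod.natCast_eq_natCast_iff', leastPosResidue]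
  conv_rhs => rw [← Nat.sub_add_cancel hx]
  rw [Nat.add_mod, Nat.mod_mod, ← Nat.add_mod]

theorem card_filter_leastPosResidue_eq_le (m N a : ℕ) :
    #{x ∈ Icc 1 N | leastPosResidue m x = a} ≤ (N - 1) / m + 1 := by
  rw [← card_range ((N - 1) / m + 1)]
  refine card_le_card_of_injOn (fun x => (x - 1) / m) (fun x hx => ?_)
    fun x hx x' hx' hxx' => ?_
  · simp only [mem_coe, mem_filter, mem_Icc, mem_range] at hx ⊢
    exact Nat.lt_succ_of_le (Nat.div_le_div_right (by omega))
  · simp only [mem_coe, mem_filter, mem_Icc] at hx hx'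
    unfold leastPosResidue at hx hx'
    have h := Nat.div_add_mod (x - 1) m
    have h' := Nat.div_add_mod (x' - 1) m
    rw [show (x - 1) / m = (x' - 1) / m from hxx'] at h
    omega

def tripleBox (N₁ N₂ N₃ : ℕ) : Finset (ℕ × ℕ × ℕ) :=
  Icc 1 N₁ ×ˢ Icc 1 N₂ ×ˢ Icc 1 N₃

def congruentPairs (m : ℕ) (S : Finset (ℕ × ℕ × ℕ)) :
    Finset ((ℕ × ℕ × ℕ) × (ℕ × ℕ × ℕ)) :=
  {p ∈ S ×ˢ S | (tripleProd p.1 : ZMod m) = tripleProd p.2}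

theorem card_congruentPairs_tripleBox_le_reduced {m : ℕ} (hm : 0 < m) (N₁ N₂ N₃ : ℕ) :
    #(congruentPairs m (tripleBox N₁ N₂ N₃)) ≤
      (((N₁ - 1) / m + 1) * ((N₂ - 1) / m + 1) * ((N₃ - 1) / m + 1)) ^ 2 *
        #(congruentPairs m (tripleBox (min N₁ m) (min N₂ m) (min N₃ m))) := by
  set r := leastPosResidue m
  refine card_filter_pairs_le_of_fibers (f := Prod.map r (Prod.map r r))
    (g := fun y => (tripleProd y : ZMod m)) (h := fun y => (tripleProd y : ZMod m))
    (fun ⟨x₁, x₂, x₃⟩ hx => ?_) (fun ⟨x₁, x₂, x₃⟩ hx => ?_) fun b _ => ?_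
  · simp only [tripleBox, mem_product, Prod.map_fst, Prod.map_snd] at hx ⊢
    exact ⟨leastPosResidue_mem_Icc hm hx.1, leastPosResidue_mem_Icc hm hx.2.1,
      leastPosResidue_mem_Icc hm hx.2.2⟩
  · simp only [tripleBox, mem_product, mem_Icc] at hx
    simp only [tripleProd, Prod.map_fst, Prod.map_snd, Nat.cast_mul, r,
      natCast_leastPosResidue hx.1.1, natCast_leastPosResidue hx.2.1.1,
      natCast_leastPosResidue hx.2.2.1]
  · rw [tripleBox, card_filter_prodMap_eq, card_filter_prodMap_eq, ← mul_assoc]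
    gcongr <;> exact card_filter_leastPosResidue_eq_le _ _ _

section tripleBox

variable {N₁ N₂ N₃ : ℕ} {y : ℕ × ℕ × ℕ}

theorem tripleProd_le_of_mem_tripleBox (hy : y ∈ tripleBox N₁ N₂ N₃) :
    tripleProd y ≤ N₁ * N₂ * N₃ := by
  simp only [tripleBox, mem_product, mem_Icc] at hy
  exact Nat.mul_le_mul (Nat.mul_le_mul hy.1.2 hy.2.1.2) hy.2.2.2

theorem tripleProd_ne_zero_of_mem_tripleBox (hy : y ∈ tripleBox N₁ N₂ N₃) :
    tripleProd y ≠ 0 := by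
  simp only [tripleBox, mem_product, mem_Icc] at hy
  exact Nat.pos_iff_ne_zero.mp (Nat.mul_pos (Nat.mul_pos hy.1.1 hy.2.1.1) hy.2.2.1)

theorem card_congruentPairs_tripleBox_le {m D : ℕ}
    (hD : ∀ v, v ≠ 0 → v ≤ N₁ * N₂ * N₃ → #v.divisors ^ 2 ≤ D) :
    #(congruentPairs m (tripleBox N₁ N₂ N₃)) ≤
      N₁ * N₂ * N₃ * (N₁ * N₂ * N₃ / m + 1) * D := by
  have hcard : #(tripleBox N₁ N₂ N₃) = N₁ * N₂ * N₃ := by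
    simp only [tripleBox, card_product, Nat.card_Icc, Nat.add_sub_cancel, mul_assoc]
  rw [← hcard]
  refine card_filter_natCast_eq_le _ tripleProd m _ D (fun y hy => hcard ▸
    tripleProd_le_of_mem_tripleBox hy) fun y hy => ?_
  exact (card_filter_tripleProd_eq_le _ (tripleProd_ne_zero_of_mem_tripleBox hy)).trans
    (hD _ (tripleProd_ne_zero_of_mem_tripleBox hy) (tripleProd_le_of_mem_tripleBox hy))

end tripleBox

theorem sub_one_div_add_one_mul_min_le (N : ℕ) {m : ℕ} (hm : 0 < m) :
    ((N - 1) / m + 1) * min N m ≤ 2 * N := by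
  rcases le_or_gt N m with h | h
  · rw [Nat.div_eq_of_lt (by omega), min_eq_left h]; omega
  · rw [min_eq_right h.le, add_mul]
    have := Nat.div_mul_le_self (N - 1) m
    omega

theorem le_min_mul_min_mul_min {m N₁ N₂ N₃ : ℕ} (h₁ : 0 < N₁) (h₂ : 0 < N₂) (h₃ : 0 < N₃)
    (hm : m < N₁ * N₂ * N₃) : m ≤ min N₁ m * min N₂ m * min N₃ m := by
  rcases le_total N₁ m with h₁m | h₁m <;> rcases le_total N₂ m with h₂m | h₂m <;>
    rcases le_total N₃ m with h₃m | h₃m <;>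
    simp only [min_eq_left, min_eq_right, *] <;>
    nlinarith [Nat.mul_pos h₁ h₂, Nat.mul_pos h₂ h₃, Nat.mul_pos h₁ h₃, Nat.le_mul_self m]

-- The loss `(∏ ⌈Nⱼ/m⌉)²` of the reduction is recovered because `N₁N₂N₃ > m`.
theorem reduced_count_mul_le {m N₁ N₂ N₃ : ℕ} (hm : 0 < m) (h₁ : 0 < N₁) (h₂ : 0 < N₂)
    (h₃ : 0 < N₃) (hmN : m < N₁ * N₂ * N₃) :
    (((N₁ - 1) / m + 1) * ((N₂ - 1) / m + 1) * ((N₃ - 1) / m + 1)) ^ 2 *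
      (min N₁ m * min N₂ m * min N₃ m * (min N₁ m * min N₂ m * min N₃ m / m + 1)) * m ≤
      128 * (N₁ * N₂ * N₃) ^ 2 := by
  set P := min N₁ m * min N₂ m * min N₃ m
  have hP : (P / m + 1) * m ≤ 2 * P := by
    have := Nat.div_mul_le_self P m
    have := le_min_mul_min_mul_min h₁ h₂ h₃ hmN
    rw [add_mul]; omega
  calc _ = (((N₁ - 1) / m + 1) * ((N₂ - 1) / m + 1) * ((N₃ - 1) / m + 1)) ^ 2 * P *
        ((P / m + 1) * m) := by ring
    _ ≤ _ * P * (2 * P) := by gcongr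
    _ = 2 * (((N₁ - 1) / m + 1) * min N₁ m * (((N₂ - 1) / m + 1) * min N₂ m) *
        (((N₃ - 1) / m + 1) * min N₃ m)) ^ 2 := by ring
    _ ≤ 2 * ((2 * N₁) * (2 * N₂) * (2 * N₃)) ^ 2 := by
        gcongr 2 * (?_ * ?_ * ?_) ^ 2 <;> exact sub_one_div_add_one_mul_min_le _ hm
    _ = 128 * (N₁ * N₂ * N₃) ^ 2 := by ring

/-- If N₁N₂N₃ > m then the number of sextuples with x₁x₂x₃ ≡ y₁y₂y₃ (mod m),
xⱼ,yⱼ ∈ [1,Nⱼ], is O_ε((N₁N₂N₃)² m^(ε-1)). -/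
theorem stmt11 :
    ∀ ε : ℝ, 0 < ε → ∃ C : ℝ, 0 < C ∧ ∀ m N₁ N₂ N₃ : ℕ, 0 < m →
      0 < N₁ → 0 < N₂ → 0 < N₃ → m < N₁ * N₂ * N₃ →
      ((((Finset.Icc 1 N₁ ×ˢ Finset.Icc 1 N₂ ×ˢ Finset.Icc 1 N₃) ×ˢ
          (Finset.Icc 1 N₁ ×ˢ Finset.Icc 1 N₂ ×ˢ Finset.Icc 1 N₃)).filter
          (fun t => ((t.1.1 * t.1.2.1 * t.1.2.2 : ℕ) : ZMod m)
              = ((t.2.1 * t.2.2.1 * t.2.2.2 : ℕ) : ZMod m))).card : ℝ)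
        ≤ C * ((N₁ * N₂ * N₃ : ℕ) : ℝ) ^ 2 * (m : ℝ) ^ (ε - 1) := by
  intro ε hε
  obtain ⟨C, hC, hdiv⟩ := exists_card_divisors_sq_le_mul_rpow_of_le_pow hε three_pos
  refine ⟨128 * C, by positivity, fun m N₁ N₂ N₃ hm h₁ h₂ h₃ hmN => ?_⟩
  change (#(congruentPairs m (tripleBox N₁ N₂ N₃)) : ℝ) ≤ _
  set D := ⌊C * (m : ℝ) ^ ε⌋₊
  have hD : ∀ v, v ≠ 0 → v ≤ min N₁ m * min N₂ m * min N₃ m → #v.divisors ^ 2 ≤ D :=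
    fun v hv hvm => Nat.le_floor <| by
      push_cast
      refine hdiv m v hv (hvm.trans ?_)
      rw [pow_three, ← mul_assoc]
      gcongr <;> apply min_le_right
  have hcount : #(congruentPairs m (tripleBox N₁ N₂ N₃)) * m ≤ 128 * (N₁ * N₂ * N₃) ^ 2 * D :=
    calc #(congruentPairs m (tripleBox N₁ N₂ N₃)) * m ≤ _ * (_ * D) * m :=
          Nat.mul_le_mul_right m <| (card_congruentPairs_tripleBox_le_reduced hm N₁ N₂ N₃).trans
            (Nat.mul_le_mul_left _ (card_congruentPairs_tripleBox_le hD))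
      _ = _ * D := by ring
      _ ≤ 128 * (N₁ * N₂ * N₃) ^ 2 * D :=
          Nat.mul_le_mul_right D (reduced_count_mul_le hm h₁ h₂ h₃ hmN)
  have hm' : (0 : ℝ) < m := by exact_mod_cast hm
  rw [rpow_sub_one hm'.ne', ← mul_div_assoc, le_div_iff₀ hm']
  calc (#(congruentPairs m (tripleBox N₁ N₂ N₃)) : ℝ) * m
      ≤ 128 * ((N₁ * N₂ * N₃ : ℕ) : ℝ) ^ 2 * D := by exact_mod_cast hcount
    _ ≤ 128 * ((N₁ * N₂ * N₃ : ℕ) : ℝ) ^ 2 * (C * (m : ℝ) ^ ε) := by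
        gcongr; exact Nat.floor_le (by positivity)
    _ = 128 * C * ((N₁ * N₂ * N₃ : ℕ) : ℝ) ^ 2 * (m : ℝ) ^ ε := by ring
end
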